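/- Let s = (s_1,…,s_r) ∈ N^r and for 1 ≤ ℓ ≤ r set d_ℓ := s_ℓ + ··· + s_r, d := d_1 + ··· + d_r. Let u_1,…,u_{r-1} ∈ C_∞ with |u_ℓ|_∞ ≤ q^{s_ℓ q/(q-1)}, and let P_i ∈ Mat_d(C_∞) be the coefficients of the logarithm log_G = Σ_{i≥0} P_i τ^i of the t-module G = G_{s,u} with ρ_t = θI_d + N + Eτ as in the paper. Then for all i ≥ 0, 1 ≤ ℓ ≤ r, 1 ≤ j ≤ d_ℓ: |P_i N^{d_ℓ − j} E_ℓ|_∞ ≤ q^{(d_ℓ − j) q^i − (d_ℓ q^i − d_1)·q/(q-1)}. -/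

import Mathlib

/-!
By induction on `i`, every entry of `P_i` in the (1-based) column `j` of block `ℓ` has norm at
most `q ^ e_i(d_ℓ, j)`, where `e_i(d, j) = (d - j) q^i - (d q^i - d_1) q/(q-1)` is
`coeffExponent`. In the recursion for `P_{i+1}`, right multiplication by `N^n` shifts columns
inside a block while `E` lives in the first columns of the blocks, so only `n = j - 1` survives,
which forces `m ≥ j - 1`. The nonzero entries of `E^{(i)}` in block column `ℓ` sit in last rows
of blocks `ℓ' ≤ ℓ`; there the inductive bound `q ^ e_i(d_ℓ', d_ℓ')` times
`|∏ u_e|^{q^i} ≤ q ^ ((d_ℓ' - d_ℓ) q^{i+1}/(q-1))` equals `q ^ e_i(d_ℓ, d_ℓ)` whatever `ℓ'` is.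
As `|θ^{q^{i+1}} - θ| = q^{q^{i+1}}`, the ultrametric inequality bounds the entry of `P_{i+1}` by
`q ^ (e_i(d_ℓ, d_ℓ) - j q^{i+1}) = q ^ e_{i+1}(d_ℓ, j)`.
-/

open Finset Matrix

section Ultrametric

variable {F : Type*} [NormedField F] [IsUltrametricDist F]

lemma norm_pow_sub_self {θ : F} (hθ : 1 < ‖θ‖) {k : ℕ} (hk : 2 ≤ k) :
    ‖θ ^ k - θ‖ = ‖θ‖ ^ k := by
  have hlt : ‖-θ‖ < ‖θ ^ k‖ := by
    rw [norm_neg, norm_pow]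
    exact lt_self_pow₀ hθ (by omega)
  rw [sub_eq_add_neg, IsUltrametricDist.norm_add_eq_max_of_norm_ne_norm hlt.ne',
    max_eq_left hlt.le, norm_pow]

lemma norm_inv_pow_pow_sub_self_le {θ : F} {q : ℕ} (hq : 2 ≤ q) (hθ : ‖θ‖ = q) {k : ℕ}
    (hk : k ≠ 0) {c m : ℕ} (hcm : c ≤ m) :
    ‖((θ ^ q ^ k - θ) ^ (m + 1))⁻¹‖ ≤ ((q : ℝ) ^ (q ^ k * (c + 1)))⁻¹ := by
  have hq1 : (1 : ℝ) < q := by exact_mod_cast hq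
  rw [norm_inv, norm_pow, norm_pow_sub_self (hθ ▸ hq1) (hq.trans (Nat.le_self_pow hk q)), hθ,
    ← pow_mul]
  gcongr
  exact hq1.le

lemma norm_mul_apply_le_of_forall {m n o : Type*} [Fintype n] (A : Matrix m n F)
    (B : Matrix n o F) {C : ℝ} (hC : 0 ≤ C) (x : m) (y : o)
    (h : ∀ z, ‖A x z‖ * ‖B z y‖ ≤ C) : ‖(A * B) x y‖ ≤ C :=
  IsUltrametricDist.norm_sum_le_of_forall_le_of_nonneg hC fun z _ =>
    (norm_mul _ _).trans_le (h z)

end Ultrametric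

section BlockShift

variable {ι : Type*} {κ : ι → ℕ}

lemma sigma_fin_ext {x y : Σ l, Fin (κ l)} (h1 : x.1 = y.1) (h2 : (x.2 : ℕ) = y.2) : x = y :=
  Sigma.ext h1 ((Fin.heq_ext_iff (congrArg κ h1)).2 h2)

lemma sigma_fin_mk_eq_iff {x : Σ l, Fin (κ l)} {l : ι} {a : ℕ} (ha : a < κ l) :
    ⟨l, ⟨a, ha⟩⟩ = x ↔ x.1 = l ∧ (x.2 : ℕ) = a :=
  ⟨fun h => h ▸ ⟨rfl, rfl⟩, fun h => (sigma_fin_ext h.1 h.2).symm⟩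

variable [DecidableEq ι]

variable (κ) in
def blockShift (R : Type*) [Zero R] [One R] : Matrix (Σ l, Fin (κ l)) (Σ l, Fin (κ l)) R :=
  fun x y => if x.1 = y.1 ∧ (y.2 : ℕ) = x.2 + 1 then 1 else 0

variable {R : Type*}

lemma eq_single_of_apply_eq_ite [Zero R] [One R] {l : ι} (hl : 0 < κ l)
    (A : Matrix (Σ l, Fin (κ l)) (Σ l, Fin (κ l)) R)
    (hA : ∀ x y, A x y =
      if x.1 = l ∧ y.1 = l ∧ (x.2 : ℕ) = κ l - 1 ∧ (y.2 : ℕ) = 0 then 1 else 0) :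
    A = single ⟨l, ⟨κ l - 1, by omega⟩⟩ ⟨l, ⟨0, hl⟩⟩ 1 := by
  ext x y
  simp only [hA, single_apply, sigma_fin_mk_eq_iff, and_assoc, and_left_comm]

variable [Fintype ι] [Semiring R]

lemma blockShift_mul_apply {α : Type*} (A : Matrix (Σ l, Fin (κ l)) α R) (x y) :
    (blockShift κ R * A) x y =
      if h : (x.2 : ℕ) + 1 < κ x.1 then A ⟨x.1, ⟨x.2 + 1, h⟩⟩ y else 0 := by
  rw [mul_apply]
  split_ifs with h
  · rw [sum_eq_single ⟨x.1, ⟨x.2 + 1, h⟩⟩]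
    · rw [blockShift, if_pos ⟨rfl, rfl⟩, one_mul]
    · intro z _ hz
      rw [blockShift, if_neg, zero_mul]
      rintro ⟨h1, h2⟩
      exact hz (sigma_fin_ext h1.symm h2)
    · simp
  · refine sum_eq_zero fun z _ => ?_
    rw [blockShift, if_neg, zero_mul]
    rintro ⟨h1, h2⟩
    have := congrArg κ h1
    have := z.2.isLt
    omega

lemma mul_blockShift_apply {α : Type*} (A : Matrix α (Σ l, Fin (κ l)) R) (x y) :
    (A * blockShift κ R) x y =
      if h : 1 ≤ (y.2 : ℕ) then A x ⟨y.1, ⟨y.2 - 1, by omega⟩⟩ else 0 := by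
  rw [mul_apply]
  split_ifs with h
  · rw [sum_eq_single ⟨y.1, ⟨y.2 - 1, by omega⟩⟩]
    · rw [blockShift, if_pos ⟨rfl, by dsimp only; omega⟩, mul_one]
    · intro z _ hz
      rw [blockShift, if_neg, mul_zero]
      rintro ⟨h1, h2⟩
      exact hz (sigma_fin_ext h1 (by dsimp only; omega))
    · simp
  · refine sum_eq_zero fun z _ => ?_
    rw [blockShift, if_neg, mul_zero]
    omega

lemma blockShift_pow_mul_apply {α : Type*} (A : Matrix (Σ l, Fin (κ l)) α R) (k : ℕ) (x y) :
    (blockShift κ R ^ k * A) x y =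
      if h : (x.2 : ℕ) + k < κ x.1 then A ⟨x.1, ⟨x.2 + k, h⟩⟩ y else 0 := by
  induction k generalizing x with
  | zero => simp
  | succ k ih =>
    rw [pow_succ', Matrix.mul_assoc, blockShift_mul_apply]
    split_ifs with h1 h2 h2
    · rw [ih]
      simp only [dif_pos (show (x.2 : ℕ) + 1 + k < κ x.1 by omega)]
      congr 3
      omega
    · rw [ih, dif_neg (by dsimp only; omega)]
    · omega
    · rfl

lemma mul_blockShift_pow_apply {α : Type*} (A : Matrix α (Σ l, Fin (κ l)) R) (n : ℕ) (x y) :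
    (A * blockShift κ R ^ n) x y =
      if h : n ≤ (y.2 : ℕ) then A x ⟨y.1, ⟨y.2 - n, by omega⟩⟩ else 0 := by
  induction n generalizing y with
  | zero => simp
  | succ n ih =>
    rw [pow_succ, ← Matrix.mul_assoc, mul_blockShift_apply]
    split_ifs with h1 h2 h2
    · rw [ih]
      simp only [dif_pos (show n ≤ (y.2 : ℕ) - 1 by omega)]
      congr 3
      omega
    · rw [ih, dif_neg (by dsimp only; omega)]
    · omega
    · rfl

lemma mul_blockShift_pow_apply_of_eq_zero_of_snd_ne_zero {α : Type*}
    (M : Matrix α (Σ l, Fin (κ l)) R) (hM : ∀ x y, (y.2 : ℕ) ≠ 0 → M x y = 0) (n : ℕ) (x y) :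
    (M * blockShift κ R ^ n) x y = if (y.2 : ℕ) = n then M x ⟨y.1, ⟨0, y.2.pos⟩⟩ else 0 := by
  rw [mul_blockShift_pow_apply]
  split_ifs with h1 h2 h2
  · congr 3
    omega
  · exact hM _ _ (by dsimp only; omega)
  · omega
  · rfl

lemma mul_blockShift_pow_mul_single_apply {α : Type*} (A : Matrix α (Σ l, Fin (κ l)) R) {l : ι}
    {j : ℕ} (hj : 1 ≤ j) (hjl : j ≤ κ l) (x y) :
    (A * blockShift κ R ^ (κ l - j) *
        single (⟨l, ⟨κ l - 1, by omega⟩⟩ : Σ l, Fin (κ l))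
          (⟨l, ⟨0, by omega⟩⟩ : Σ l, Fin (κ l)) (1 : R)) x y =
      if y = (⟨l, ⟨0, by omega⟩⟩ : Σ l, Fin (κ l)) then A x ⟨l, ⟨j - 1, by omega⟩⟩ else 0 := by
  split_ifs with hy
  · rw [hy, mul_single_apply_same, mul_one, mul_blockShift_pow_apply,
      dif_pos (show κ l - j ≤ κ l - 1 by omega)]
    congr 3
    dsimp only
    omega
  · exact mul_single_apply_of_ne (hbj := hy) ..

end BlockShift

section Exponent

variable (q D : ℝ)

noncomputable def coeffExponent (i : ℕ) (d j : ℝ) : ℝ :=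
  (d - j) * q ^ i - (d * q ^ i - D) * (q / (q - 1))

variable {q D}

lemma coeffExponent_zero_nonneg (hq : 1 < q) {d j : ℝ} (hj : j ≤ d) (hd : d ≤ D) :
    0 ≤ coeffExponent q D 0 d j := by
  have hQ : 0 ≤ q / (q - 1) := div_nonneg (by linarith) (by linarith)
  rw [coeffExponent, pow_zero, mul_one, mul_one]
  nlinarith

lemma coeffExponent_succ (hq : q ≠ 1) (i : ℕ) (d j : ℝ) :
    coeffExponent q D (i + 1) d j = coeffExponent q D i d d - j * q ^ (i + 1) := by
  have : q - 1 ≠ 0 := sub_ne_zero.2 hq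
  simp only [coeffExponent]
  field_simp
  ring

lemma coeffExponent_self_add (i : ℕ) (d d' : ℝ) :
    coeffExponent q D i d' d' + (d' - d) * (q / (q - 1)) * q ^ i = coeffExponent q D i d d := by
  simp only [coeffExponent]
  ring

end Exponent

section Estimate

variable {F : Type*} [NormedField F] [IsUltrametricDist F]
  {ι : Type*} [Fintype ι] {κ : ι → ℕ} {q : ℕ} {D : ℝ}
  {E : Matrix (Σ l, Fin (κ l)) (Σ l, Fin (κ l)) F}

lemma norm_mul_map_pow_apply_le (hq : 0 < q) (hErow : ∀ z y, (z.2 : ℕ) + 1 ≠ κ z.1 → E z y = 0)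
    (hEnorm : ∀ z y, ‖E z y‖ ≤ (q : ℝ) ^ (((κ z.1 : ℝ) - κ y.1) * (q / (q - 1))))
    {α : Type*} (A : Matrix α (Σ l, Fin (κ l)) F) (i : ℕ)
    (hA : ∀ x z, (z.2 : ℕ) + 1 = κ z.1 →
      ‖A x z‖ ≤ (q : ℝ) ^ coeffExponent q D i (κ z.1) (κ z.1)) (x y) :
    ‖(A * E.map (· ^ q ^ i)) x y‖ ≤ (q : ℝ) ^ coeffExponent q D i (κ y.1) (κ y.1) := by
  have hq0 : (0 : ℝ) < q := by exact_mod_cast hq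
  refine norm_mul_apply_le_of_forall _ _ (by positivity) x y fun z => ?_
  rw [map_apply, norm_pow]
  by_cases hz : (z.2 : ℕ) + 1 = κ z.1
  · calc ‖A x z‖ * ‖E z y‖ ^ q ^ i
        ≤ (q : ℝ) ^ coeffExponent q D i (κ z.1) (κ z.1) *
          ((q : ℝ) ^ (((κ z.1 : ℝ) - κ y.1) * (q / (q - 1)))) ^ q ^ i := by
          gcongr
          exacts [hA x z hz, hEnorm z y]
      _ = (q : ℝ) ^ coeffExponent q D i (κ y.1) (κ y.1) := by
          rw [← Real.rpow_mul_natCast hq0.le, ← Real.rpow_add hq0]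
          push_cast
          rw [coeffExponent_self_add]
  · rw [hErow z y hz, norm_zero, zero_pow (by positivity), mul_zero]
    positivity

variable [DecidableEq ι]

lemma norm_blockShift_pow_mul_mul_map_pow_apply_le (hq : 0 < q)
    (hErow : ∀ z y, (z.2 : ℕ) + 1 ≠ κ z.1 → E z y = 0)
    (hEnorm : ∀ z y, ‖E z y‖ ≤ (q : ℝ) ^ (((κ z.1 : ℝ) - κ y.1) * (q / (q - 1))))
    (i : ℕ) (P : Matrix (Σ l, Fin (κ l)) (Σ l, Fin (κ l)) F)
    (hP : ∀ x y, ‖P x y‖ ≤ (q : ℝ) ^ coeffExponent q D i (κ y.1) (y.2 + 1)) (k : ℕ) (x y) :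
    ‖(blockShift κ F ^ k * P * E.map (· ^ q ^ i)) x y‖ ≤
      (q : ℝ) ^ coeffExponent q D i (κ y.1) (κ y.1) := by
  refine norm_mul_map_pow_apply_le hq hErow hEnorm _ i (fun x z hz => ?_) x y
  rw [blockShift_pow_mul_apply]
  split_ifs with h
  · have hz' : ((z.2 : ℕ) : ℝ) + 1 = κ z.1 := by exact_mod_cast hz
    simpa only [hz'] using hP _ z
  · rw [norm_zero]
    positivity

lemma norm_logCoeff_succ_apply_le (hq : 2 ≤ q) {θ : F} (hθ : ‖θ‖ = q)
    (hEcol : ∀ z y, (y.2 : ℕ) ≠ 0 → E z y = 0) (hErow : ∀ z y, (z.2 : ℕ) + 1 ≠ κ z.1 → E z y = 0)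
    (hEnorm : ∀ z y, ‖E z y‖ ≤ (q : ℝ) ^ (((κ z.1 : ℝ) - κ y.1) * (q / (q - 1))))
    (M i : ℕ) (P : Matrix (Σ l, Fin (κ l)) (Σ l, Fin (κ l)) F)
    (hP : ∀ x y, ‖P x y‖ ≤ (q : ℝ) ^ coeffExponent q D i (κ y.1) (y.2 + 1)) (x y) :
    ‖(- ∑ m ∈ range M, ((θ ^ q ^ (i + 1) - θ) ^ (m + 1))⁻¹ •
        ∑ n ∈ range (m + 1), ((-1 : F) ^ n * (m.choose n : F)) •
          (blockShift κ F ^ (m - n) * P * E.map (· ^ q ^ i) * blockShift κ F ^ n)) x y‖ ≤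
      (q : ℝ) ^ coeffExponent q D (i + 1) (κ y.1) (y.2 + 1) := by
  have hq1 : (1 : ℝ) < q := by exact_mod_cast hq
  have hcol_zero (k : ℕ) : ∀ x y, (y.2 : ℕ) ≠ 0 →
      (blockShift κ F ^ k * P * E.map (· ^ q ^ i)) x y = 0 := fun x y hy => by
    simp only [mul_apply, map_apply, hEcol _ y hy, zero_pow (pow_ne_zero i (by omega : q ≠ 0)),
      mul_zero, sum_const_zero]
  rw [Matrix.neg_apply, norm_neg, Matrix.sum_apply]
  refine IsUltrametricDist.norm_sum_le_of_forall_le_of_nonneg (by positivity) fun m _ => ?_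
  simp only [Matrix.smul_apply, Matrix.sum_apply, smul_eq_mul,
    mul_blockShift_pow_apply_of_eq_zero_of_snd_ne_zero _ (hcol_zero _), mul_ite, mul_zero,
    sum_ite_eq]
  split_ifs with hm
  · have hcoef : ‖(-1 : F) ^ (y.2 : ℕ) * (m.choose y.2 : F)‖ ≤ 1 := by
      rw [norm_mul, norm_pow, norm_neg, norm_one, one_pow, one_mul]
      exact IsUltrametricDist.norm_natCast_le_one F _
    calc _ ≤ ((q : ℝ) ^ (q ^ (i + 1) * (y.2 + 1)))⁻¹ *
          (1 * (q : ℝ) ^ coeffExponent q D i (κ y.1) (κ y.1)) := by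
          rw [norm_mul, norm_mul]
          gcongr
          · exact norm_inv_pow_pow_sub_self_le hq hθ (Nat.succ_ne_zero i)
              (Nat.le_of_lt_succ (mem_range.1 hm))
          · exact norm_blockShift_pow_mul_mul_map_pow_apply_le (by omega) hErow hEnorm i P hP _ x _
      _ = (q : ℝ) ^ coeffExponent q D (i + 1) (κ y.1) (y.2 + 1) := by
          rw [coeffExponent_succ hq1.ne', Real.rpow_sub (by positivity), one_mul, inv_mul_eq_div,
            ← Real.rpow_natCast]
          push_cast
          ring_nf
  · rw [norm_zero]
    positivity

theorem norm_logCoeff_apply_le (hq : 2 ≤ q) {θ : F} (hθ : ‖θ‖ = q)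
    (hEcol : ∀ z y, (y.2 : ℕ) ≠ 0 → E z y = 0) (hErow : ∀ z y, (z.2 : ℕ) + 1 ≠ κ z.1 → E z y = 0)
    (hEnorm : ∀ z y, ‖E z y‖ ≤ (q : ℝ) ^ (((κ z.1 : ℝ) - κ y.1) * (q / (q - 1))))
    (hκ : ∀ l, (κ l : ℝ) ≤ D) (M : ℕ) (P : ℕ → Matrix (Σ l, Fin (κ l)) (Σ l, Fin (κ l)) F)
    (hP0 : P 0 = 1)
    (hPrec : ∀ i, P (i + 1) = - ∑ m ∈ range M, ((θ ^ q ^ (i + 1) - θ) ^ (m + 1))⁻¹ •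
      ∑ n ∈ range (m + 1), ((-1 : F) ^ n * (m.choose n : F)) •
        (blockShift κ F ^ (m - n) * P i * E.map (· ^ q ^ i) * blockShift κ F ^ n))
    (i : ℕ) (x y) : ‖P i x y‖ ≤ (q : ℝ) ^ coeffExponent q D i (κ y.1) (y.2 + 1) := by
  induction i generalizing x y with
  | zero =>
    have hq1 : (1 : ℝ) < q := by exact_mod_cast hq
    have hy : ((y.2 : ℕ) : ℝ) + 1 ≤ κ y.1 := by exact_mod_cast y.2.isLt
    calc ‖(P 0) x y‖ ≤ 1 := by
          rw [hP0, one_apply]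
          split_ifs <;> simp
      _ ≤ _ := Real.one_le_rpow hq1.le (coeffExponent_zero_nonneg hq1 hy (hκ y.1))
  | succ i ih =>
    rw [hPrec]
    exact norm_logCoeff_succ_apply_le hq hθ hEcol hErow hEnorm M i (P i) ih x y

end Estimate

lemma norm_neg_one_pow_mul_prod_le {F : Type*} [NormedField F] {q r : ℕ} (hq : 0 < q)
    {s : ℕ → ℕ} {u : ℕ → F}
    (hu : ∀ e, e + 1 < r → ‖u e‖ ≤ (q : ℝ) ^ ((s e : ℝ) * q / ((q : ℝ) - 1)))
    {dl : ℕ → ℕ} (hdl : ∀ l, dl l = ∑ e ∈ Ico l r, s e) {a b : ℕ} (hab : a ≤ b) (hb : b < r) :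
    ‖(-1 : F) ^ (b - a) * ∏ e ∈ Ico a b, u e‖ ≤
      (q : ℝ) ^ (((dl a : ℝ) - dl b) * (q / (q - 1))) := by
  have hd : (dl a : ℝ) - dl b = ∑ e ∈ Ico a b, (s e : ℝ) := by
    rw [hdl, hdl, ← sum_Ico_consecutive _ hab hb.le]
    push_cast
    ring
  rw [norm_mul, norm_pow, norm_neg, norm_one, one_pow, one_mul, norm_prod, hd, sum_mul,
    Real.rpow_sum_of_pos (by exact_mod_cast hq)]
  refine prod_le_prod (fun _ _ => norm_nonneg _) fun e he => ?_
  rw [← mul_div_assoc]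
  exact hu e (by rw [mem_Ico] at he; omega)

theorem log_coefficient_estimate_general (F : Type*) [NormedField F]
    (hna : ∀ x y : F, ‖x + y‖ ≤ max ‖x‖ ‖y‖)
    (q : ℕ) (hq : 2 ≤ q) (θ : F) (hθ : ‖θ‖ = q)
    (r : ℕ) (s : ℕ → ℕ)
    (u : ℕ → F) (hu : ∀ e, e + 1 < r → ‖u e‖ ≤ (q : ℝ) ^ ((s e : ℝ) * q / ((q : ℝ) - 1)))
    (dl : ℕ → ℕ) (hdl : ∀ l, dl l = ∑ e ∈ Finset.Ico l r, s e)
    (N E : Matrix ((l : Fin r) × Fin (dl l.val)) ((l : Fin r) × Fin (dl l.val)) F)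
    (hN : ∀ x y, N x y = if x.1 = y.1 ∧ (y.2 : ℕ) = (x.2 : ℕ) + 1 then 1 else 0)
    (hE : ∀ x y, E x y =
      if (x.2 : ℕ) = dl x.1.val - 1 ∧ (y.2 : ℕ) = 0 ∧ x.1 ≤ y.1 then
        (-1 : F) ^ ((y.1 : ℕ) - (x.1 : ℕ)) * ∏ e ∈ Finset.Ico (x.1 : ℕ) (y.1 : ℕ), u e
      else 0)
    (El : Fin r → Matrix ((l : Fin r) × Fin (dl l.val)) ((l : Fin r) × Fin (dl l.val)) F)
    (hEl : ∀ l x y, El l x y =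
      if x.1 = l ∧ y.1 = l ∧ (x.2 : ℕ) = dl l.val - 1 ∧ (y.2 : ℕ) = 0 then 1 else 0)
    (P : ℕ → Matrix ((l : Fin r) × Fin (dl l.val)) ((l : Fin r) × Fin (dl l.val)) F)
    (hP0 : P 0 = 1)
    (hPrec : ∀ i, P (i + 1) = - ∑ m ∈ Finset.range (2 * dl 0 - 1),
      ((θ ^ q ^ (i + 1) - θ) ^ (m + 1))⁻¹ •
        ∑ n ∈ Finset.range (m + 1), ((-1 : F) ^ n * (Nat.choose m n : F)) •
          (N ^ (m - n) * P i * (E.map fun x => x ^ q ^ i) * N ^ n)) :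
    ∀ (i : ℕ) (l : Fin r) (j : ℕ), 1 ≤ j → j ≤ dl l.val →
      ∀ x y, ‖(P i * N ^ (dl l.val - j) * El l) x y‖ ≤
        (q : ℝ) ^ (((dl l.val : ℝ) - j) * (q : ℝ) ^ i -
          ((dl l.val : ℝ) * (q : ℝ) ^ i - (dl 0 : ℝ)) * ((q : ℝ) / ((q : ℝ) - 1))) := by
  have := IsUltrametricDist.isUltrametricDist_of_forall_norm_add_le_max_norm hna
  obtain rfl : N = blockShift _ F := Matrix.ext hN
  have hEnorm (z y : (l : Fin r) × Fin (dl l.val)) :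
      ‖E z y‖ ≤ (q : ℝ) ^ (((dl z.1 : ℝ) - dl y.1) * (q / (q - 1))) := by
    rw [hE]
    split_ifs with h
    · exact norm_neg_one_pow_mul_prod_le (by omega) hu hdl h.2.2 y.1.isLt
    · rw [norm_zero]
      positivity
  have hdl_le (l : Fin r) : (dl l : ℝ) ≤ dl 0 := by
    rw [hdl, hdl]
    exact_mod_cast sum_le_sum_of_subset (Ico_subset_Ico (Nat.zero_le _) le_rfl)
  have hP := norm_logCoeff_apply_le hq hθ (fun z y hy => by rw [hE, if_neg (by tauto)])
    (fun z y hz => by rw [hE, if_neg (by have := z.2.isLt; omega)]) hEnorm hdl_le _ P hP0 hPrec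
  intro i l j hj hjl x y
  have hl : 0 < dl l := by omega
  rw [eq_single_of_apply_eq_ite (κ := fun l : Fin r => dl l) hl (El l) (hEl l),
    mul_blockShift_pow_mul_single_apply (κ := fun l : Fin r => dl l) _ hj hjl]
  split_ifs
  · simpa only [Nat.cast_pred hj, sub_add_cancel, coeffExponent] using hP i x ⟨l, ⟨j - 1, by omega⟩⟩
  · rw [norm_zero]
    positivity

/-- The key estimate on the coefficients `P_i` of the logarithm
`log_G = Σ P_i τ^i` of the `t`-module `G = G_{s,u}`: if `|u_ℓ|_∞ ≤ q^{s_ℓ q/(q-1)}`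
then every entry of `P_i N^{d_ℓ - j} E_ℓ` has absolute value at most
`q^{(d_ℓ - j) q^i − (d_ℓ q^i − d_1) q/(q-1)}`.
Coordinates are indexed by the sigma type `(ℓ : Fin r) × Fin (d_ℓ)` (the block
decomposition of `Fin d`, `d = d_1 + ⋯ + d_r`); indices `ℓ`, blocks and `u` are
0-based, so `d_1 = dl 0` and the `(ℓ,m)` block entry of `E` is
`(-1)^{m-ℓ} ∏_{e=ℓ}^{m-1} u_e`. -/
theorem log_coefficient_estimate (F : Type*) [NormedField F]
    (hna : ∀ x y : F, ‖x + y‖ ≤ max ‖x‖ ‖y‖)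
    (q : ℕ) (hq : 2 ≤ q) (θ : F) (hθ : ‖θ‖ = q)
    (r : ℕ) (hr : 1 ≤ r) (s : ℕ → ℕ) (hs : ∀ e, e < r → 1 ≤ s e)
    (u : ℕ → F) (hu : ∀ e, e + 1 < r → ‖u e‖ ≤ (q : ℝ) ^ ((s e : ℝ) * q / ((q : ℝ) - 1)))
    (dl : ℕ → ℕ) (hdl : ∀ l, dl l = ∑ e ∈ Finset.Ico l r, s e)
    (N E : Matrix ((l : Fin r) × Fin (dl l.val)) ((l : Fin r) × Fin (dl l.val)) F)
    (hN : ∀ x y, N x y = if x.1 = y.1 ∧ (y.2 : ℕ) = (x.2 : ℕ) + 1 then 1 else 0)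
    (hE : ∀ x y, E x y =
      if (x.2 : ℕ) = dl x.1.val - 1 ∧ (y.2 : ℕ) = 0 ∧ x.1 ≤ y.1 then
        (-1 : F) ^ ((y.1 : ℕ) - (x.1 : ℕ)) * ∏ e ∈ Finset.Ico (x.1 : ℕ) (y.1 : ℕ), u e
      else 0)
    (El : Fin r → Matrix ((l : Fin r) × Fin (dl l.val)) ((l : Fin r) × Fin (dl l.val)) F)
    (hEl : ∀ l x y, El l x y =
      if x.1 = l ∧ y.1 = l ∧ (x.2 : ℕ) = dl l.val - 1 ∧ (y.2 : ℕ) = 0 then 1 else 0)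
    (P : ℕ → Matrix ((l : Fin r) × Fin (dl l.val)) ((l : Fin r) × Fin (dl l.val)) F)
    (hP0 : P 0 = 1)
    (hPrec : ∀ i, P (i + 1) = - ∑ m ∈ Finset.range (2 * dl 0 - 1),
      ((θ ^ q ^ (i + 1) - θ) ^ (m + 1))⁻¹ •
        ∑ n ∈ Finset.range (m + 1), ((-1 : F) ^ n * (Nat.choose m n : F)) •
          (N ^ (m - n) * P i * (E.map fun x => x ^ q ^ i) * N ^ n)) :
    ∀ (i : ℕ) (l : Fin r) (j : ℕ), 1 ≤ j → j ≤ dl l.val →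
      ∀ x y, ‖(P i * N ^ (dl l.val - j) * El l) x y‖ ≤
        (q : ℝ) ^ (((dl l.val : ℝ) - j) * (q : ℝ) ^ i -
          ((dl l.val : ℝ) * (q : ℝ) ^ i - (dl 0 : ℝ)) * ((q : ℝ) / ((q : ℝ) - 1))) :=
  log_coefficient_estimate_general F hna q hq θ hθ r s u hu dl hdl N E hN hE El hEl P hP0 hPrec
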